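/- arXiv:1710.04193 — 4 statements merged into one kernel-verified Lean document; each statement's English description precedes it below -/
import Mathlib

section
/- For every δ ∈ [0,1), every C > 0, every α ∈ (0, 1/2), every β > 0, and every integer k ≥ 1, there exist disjoint finite sets A, B ⊆ [0,1]² with A ∪ B nonempty and ||A| − |B|| < β·|A ∪ B|, such that for every partition of [0,1]² into measurable sets D₁, …, D_k, if (a) for every i, (1−δ)·⌊|A∪B|/k⌋ ≤ |(A∪B) ∩ D_i| ≤ (1+δ)·⌈|A∪B|/k⌉, and (b) for every i there exists P_i ≥ 0 such that vol(cthickening(r, frontier(D_i))) ≤ 2·P_i·r + π·r² for all r > 0 and P_i² ≤ C·vol(D_i), then |A ∩ D_i| > |B ∩ D_i| for every i and the efficiency gap satisfies EG(D₁,…,D_k; A, B) ≤ −(1/2 − α). -/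
/-!
Voters are placed in `M²` tiny clusters, one per cell of an `M × M` grid on `[0,1]²`, each made of
`q + 1` voters for `A` and `q` for `B`, so the electorate is almost balanced. A district containing
a whole cluster gains `A` a lead of one vote, while a split cluster lies within `1/(2M)` of the
district's frontier. Disjoint balls of radius `1/(2M)` around the split clusters fit into the
`1/M`-tube around the frontier, whose area is at most `2P/M + π/M²`, so a district splits only
`O(√C · M)` clusters. One-person-one-vote gives every district about `M²/k` clusters, hence for `M`
large `A` wins every district, with `q + 1` against `q` voters per cluster, which pushes the
efficiency gap down to `-1/2 + 1/(2q + 1)`.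
-/

open MeasureTheory Metric Set ENNReal

noncomputable section

/-- The plane `ℝ²` with the Euclidean metric. -/
abbrev Plane := EuclideanSpace ℝ (Fin 2)

/-- The closed unit square `[0,1]² ⊆ ℝ²`. -/
def unitSq : Set Plane := {x | x 0 ∈ Set.Icc (0 : ℝ) 1 ∧ x 1 ∈ Set.Icc (0 : ℝ) 1}

/-- Difference `w_A - w_B` of wasted votes of the two parties `A`, `B` in the district `D`:
the winner wastes its count in excess of `⌈s/2⌉` (where `s` is the total count in `D`),
and the loser wastes its full count. -/
def wasteDiff (A B D : Set Plane) : ℝ :=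
  if (B ∩ D).ncard < (A ∩ D).ncard then
    (((A ∩ D).ncard : ℝ) - ⌈(((A ∩ D).ncard : ℝ) + ((B ∩ D).ncard : ℝ)) / 2⌉)
      - ((B ∩ D).ncard : ℝ)
  else
    ((A ∩ D).ncard : ℝ)
      - (((B ∩ D).ncard : ℝ) - ⌈(((A ∩ D).ncard : ℝ) + ((B ∩ D).ncard : ℝ)) / 2⌉)

/-- The efficiency gap of the districting `D₁, …, D_k` for parties `A`, `B`. -/
def effGap (A B : Set Plane) {k : ℕ} (D : Fin k → Set Plane) : ℝ :=
  (∑ i, wasteDiff A B (D i)) / ((A ∪ B).ncard : ℝ)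

theorem IsPreconnected.inter_frontier_nonempty {X : Type*} [TopologicalSpace X] {s t : Set X}
    (hs : IsPreconnected s) (hst : (s ∩ t).Nonempty) (hst' : (s \ t).Nonempty) :
    (s ∩ frontier t).Nonempty := by
  by_contra! h
  have hcover : s ⊆ interior t ∪ (closure t)ᶜ := fun x hx => by
    by_contra hx'
    simp only [mem_union, mem_compl_iff, not_or, not_not] at hx'
    exact h.subset ⟨hx, hx'.2, hx'.1⟩
  rcases hs.subset_or_subset isOpen_interior isClosed_closure.isOpen_compl
    (disjoint_compl_right.mono_left interior_subset_closure) hcover with hsub | hsub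
  · obtain ⟨x, hxs, hxt⟩ := hst'
    exact hxt (interior_subset (hsub hxs))
  · obtain ⟨x, hxs, hxt⟩ := hst
    exact hsub hxs (subset_closure hxt)

theorem mem_cthickening_frontier_of_mem_closedBall {E : Type*} [NormedAddCommGroup E]
    [NormedSpace ℝ E] {c x y : E} {ε : ℝ} {t : Set E} (hx : x ∈ closedBall c ε)
    (hy : y ∈ closedBall c ε) (hxt : x ∈ t) (hyt : y ∉ t) :
    c ∈ cthickening ε (frontier t) := by
  obtain ⟨z, hzc, hzt⟩ :=
    (convex_closedBall c ε).isPreconnected.inter_frontier_nonempty ⟨x, hx, hxt⟩ ⟨y, hy, hyt⟩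
  exact mem_cthickening_of_dist_le c z ε _ hzt (by rwa [dist_comm, ← mem_closedBall])

theorem card_mul_le_of_mem_cthickening_frontier {ι : Type*} {D : Set Plane}
    (hD : Bornology.IsBounded D) {P ρ ε : ℝ} (hρ : 0 ≤ ρ) (hε : 0 ≤ ε)
    (htube : (volume (cthickening (ρ + ε) (frontier D))).toReal
      ≤ 2 * P * (ρ + ε) + Real.pi * (ρ + ε) ^ 2)
    (s : Finset ι) (c : ι → Plane)
    (hsep : (s : Set ι).Pairwise fun i j => 2 * ρ ≤ dist (c i) (c j))
    (hnear : ∀ i ∈ s, c i ∈ cthickening ε (frontier D)) :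
    s.card * (Real.pi * ρ ^ 2) ≤ 2 * P * (ρ + ε) + Real.pi * (ρ + ε) ^ 2 := by
  have hdisj : (s : Set ι).PairwiseDisjoint fun i => ball (c i) ρ := fun i hi j hj hij =>
    ball_disjoint_ball (by linarith [hsep hi hj hij])
  have hsub : (⋃ i ∈ s, ball (c i) ρ) ⊆ cthickening (ρ + ε) (frontier D) :=
    iUnion₂_subset fun i hi => ball_subset_closedBall.trans <|
      (closedBall_subset_cthickening (hnear i hi) ρ).trans (cthickening_cthickening_subset hρ hε _)
  have hfin : volume (cthickening (ρ + ε) (frontier D)) ≠ ⊤ :=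
    (hD.closure.subset frontier_subset_closure).cthickening.measure_lt_top.ne
  refine le_trans ?_ htube
  calc (s.card : ℝ) * (Real.pi * ρ ^ 2)
      = (volume (⋃ i ∈ s, ball (c i) ρ)).toReal := by
        rw [measure_biUnion_finset hdisj fun i _ => measurableSet_ball]
        simp [Real.pi_nonneg, hρ, mul_comm]
    _ ≤ _ := ENNReal.toReal_mono hfin (measure_mono hsub)

theorem sum_ncard_inter_eq {ι X : Type*} [Fintype ι] {A : Set X} (hA : A.Finite)
    {D : ι → Set X} (hD : Pairwise fun i j => Disjoint (D i) (D j)) (hAD : A ⊆ ⋃ i, D i) :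
    ∑ i, (A ∩ D i).ncard = A.ncard := by
  rw [← finsum_eq_sum_of_fintype, ← ncard_iUnion_of_finite (fun i => hA.inter_of_left _)
    (fun i j hij => (hD hij).mono inter_subset_right inter_subset_right),
    ← inter_iUnion, inter_eq_left.2 hAD]

theorem ncard_image_inter_eq_sum {ι κ X : Type*} [Fintype ι] [Fintype κ] {f : ι × κ → X}
    (hf : Function.Injective f) (p : κ → Prop) [DecidablePred p] (D : Set X)
    [DecidablePred (· ∈ D)] :
    (f '' {t | p t.2} ∩ D).ncard
      = ∑ i, (Finset.univ.filter fun j => f (i, j) ∈ D ∧ p j).card := by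
  have hfilter : {t | p t.2} ∩ f ⁻¹' D = ↑(Finset.univ.filter fun t => f t ∈ D ∧ p t.2) := by
    ext
    simp [and_comm]
  rw [← image_inter_preimage, ncard_image_of_injective _ hf, hfilter, ncard_coe_finset,
    Finset.card_filter, Fintype.sum_prod_type]
  simp only [Finset.card_filter]

theorem wasteDiff_le_of_lt {A B D : Set Plane} (h : (B ∩ D).ncard < (A ∩ D).ncard) :
    wasteDiff A B D ≤ (A ∩ D).ncard / 2 - 3 * (B ∩ D).ncard / 2 := by
  rw [wasteDiff, if_pos h]
  linarith [Int.le_ceil ((((A ∩ D).ncard : ℝ) + (B ∩ D).ncard) / 2)]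

theorem effGap_le_of_forall_lt {A B : Set Plane} (hA : A.Finite) (hB : B.Finite) {k : ℕ}
    {D : Fin k → Set Plane} (hD : Pairwise fun i j => Disjoint (D i) (D j))
    (hcover : A ∪ B ⊆ ⋃ i, D i) (hwin : ∀ i, (B ∩ D i).ncard < (A ∩ D i).ncard) :
    effGap A B D ≤ (A.ncard / 2 - 3 * B.ncard / 2) / (A ∪ B).ncard := by
  have hsum (S : Set Plane) (hS : S.Finite) (hSD : S ⊆ ⋃ i, D i) :
      ∑ i, ((S ∩ D i).ncard : ℝ) = S.ncard := by
    exact_mod_cast sum_ncard_inter_eq hS hD hSD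
  refine div_le_div_of_nonneg_right ?_ (Nat.cast_nonneg _)
  calc ∑ i, wasteDiff A B (D i)
      ≤ ∑ i, (((A ∩ D i).ncard : ℝ) / 2 - 3 * (B ∩ D i).ncard / 2) :=
        Finset.sum_le_sum fun i _ => wasteDiff_le_of_lt (hwin i)
    _ = A.ncard / 2 - 3 * B.ncard / 2 := by
        rw [Finset.sum_sub_distrib, ← Finset.sum_div, ← Finset.sum_div, ← Finset.mul_sum,
          hsum A hA (subset_union_left.trans hcover), hsum B hB (subset_union_right.trans hcover)]

theorem isBounded_unitSq : Bornology.IsBounded unitSq := by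
  refine (isBounded_closedBall (x := (0 : Plane)) (r := 2)).subset fun x hx => ?_
  obtain ⟨⟨h0, h0'⟩, ⟨h1, h1'⟩⟩ := hx
  rw [mem_closedBall, dist_zero_right, EuclideanSpace.norm_eq, Fin.sum_univ_two,
    Real.sqrt_le_left (by norm_num)]
  simp only [Real.norm_eq_abs, sq_abs]
  nlinarith

def cellCenter (m n : ℕ) (a : Fin m) (b : Fin n) : Plane :=
  !₂[((a : ℝ) + 1 / 2) / m, ((b : ℝ) + 1 / 2) / n]

theorem cellCenter_mem_unitSq {m n : ℕ} (a : Fin m) (b : Fin n) :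
    cellCenter m n a b ∈ unitSq := by
  have hcoord {m : ℕ} (a : Fin m) : ((a : ℝ) + 1 / 2) / m ∈ Icc (0 : ℝ) 1 := by
    have ha : (a : ℝ) + 1 ≤ m := by exact_mod_cast a.isLt
    have hm : (0 : ℝ) < m := by linarith [Nat.cast_nonneg (α := ℝ) (a : ℕ)]
    exact ⟨by positivity, (div_le_one hm).2 (by linarith)⟩
  exact ⟨hcoord a, hcoord b⟩

theorem cellCenter_injective (m n : ℕ) :
    Function.Injective fun p : Fin m × Fin n => cellCenter m n p.1 p.2 := by
  have hcoord {m : ℕ} {a a' : Fin m} (h : ((a : ℝ) + 1 / 2) / m = ((a' : ℝ) + 1 / 2) / m) :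
      a = a' := by
    have hm : (m : ℝ) ≠ 0 := by exact_mod_cast (Fin.pos a).ne'
    exact Fin.ext (by exact_mod_cast add_right_cancel ((div_left_inj' hm).1 h))
  rintro ⟨a, b⟩ ⟨a', b'⟩ h
  exact Prod.ext (hcoord (congrArg (· 0) h)) (hcoord (congrArg (· 1) h))

theorem inv_le_dist_cellCenter {M : ℕ} {s s' : Fin M × Fin M} (h : s ≠ s') :
    1 / (M : ℝ) ≤ dist (cellCenter M M s.1 s.2) (cellCenter M M s'.1 s'.2) := by
  have hcoord {a a' : Fin M} (h : a ≠ a') :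
      1 / (M : ℝ) ≤ dist (((a : ℝ) + 1 / 2) / M) (((a' : ℝ) + 1 / 2) / M) := by
    have hM : (0 : ℝ) < M := by exact_mod_cast Fin.pos a
    have hne : (a : ℤ) - a' ≠ 0 := sub_ne_zero.2 (by exact_mod_cast Fin.val_ne_of_ne h)
    have h1 : (1 : ℝ) ≤ |(a : ℝ) - a'| := by exact_mod_cast Int.one_le_abs hne
    rw [Real.dist_eq, ← sub_div, abs_div, abs_of_pos hM, add_sub_add_right_eq_sub]
    exact div_le_div_of_nonneg_right h1 hM.le
  have hdist := PiLp.dist_apply_le (cellCenter M M s.1 s.2) (cellCenter M M s'.1 s'.2)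
  by_cases h1 : s.1 = s'.1
  · exact (hcoord fun h2 => h (Prod.ext h1 h2)).trans (hdist 1)
  · exact (hcoord h1).trans (hdist 0)

section Cluster

open Finset

variable (q : ℕ)

theorem card_filter_val_le : #{j : Fin (2 * q + 1) | ↑j ≤ q} = q + 1 := by
  have := Fin.card_filter_val_lt (n := 2 * q + 1) (m := q + 1)
  simp only [Nat.lt_succ_iff] at this
  omega

theorem card_filter_and_val_le_add (p : Fin (2 * q + 1) → Prop) [DecidablePred p] :
    #{j | p j ∧ ↑j ≤ q} + #{j | p j ∧ q < ↑j} = #{j | p j} := by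
  rw [← card_filter_add_card_filter_not (s := {j | p j}) (fun j => ↑j ≤ q)]
  simp only [filter_filter, not_le]

theorem card_filter_lt_val : #{j : Fin (2 * q + 1) | q < ↑j} = q := by
  have := card_filter_and_val_le_add q fun _ => True
  simp only [true_and, filter_true, card_univ, Fintype.card_fin, card_filter_val_le] at this
  omega

/-- A cluster inside the district gives `A` a lead of one vote per `2q + 1` voters, and a split
cluster (`c ≥ 1`) costs `A` at most `q + 1` such leads. -/
theorem card_filter_add_mul_le (p : Fin (2 * q + 1) → Prop) [DecidablePred p] {c : ℕ}
    (hc : (∃ j, p j) → (∃ j, ¬p j) → 1 ≤ c) :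
    #{j | p j} + (2 * q + 1) * #{j | p j ∧ q < ↑j}
      ≤ (2 * q + 1) * #{j | p j ∧ ↑j ≤ q} + (2 * q + 1) * (q + 1) * c := by
  by_cases hsplit : (∃ j, p j) ∧ ∃ j, ¬p j
  · have hb : #{j | p j ∧ q < ↑j} ≤ q :=
      (Finset.card_le_card (monotone_filter_right univ fun _ _ => And.right)).trans
        (card_filter_lt_val q).le
    have hP : #{j | p j} ≤ 2 * q + 1 := (card_filter_le _ _).trans (by simp)
    nlinarith [Nat.le_mul_of_pos_right ((2 * q + 1) * (q + 1)) (hc hsplit.1 hsplit.2),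
      Nat.mul_le_mul_left (2 * q + 1) hb]
  · simp only [not_and_or, not_exists, not_not] at hsplit
    rcases hsplit with hp | hp
    · simp [hp]
    · simp only [hp, true_and, filter_true, card_univ, Fintype.card_fin, card_filter_val_le,
        card_filter_lt_val]
      nlinarith [Nat.zero_le ((2 * q + 1) * (q + 1) * c)]

end Cluster

/-- Voter `j` of the cluster at site `(u, v)` is the center of cell `((2q+1)u + j, v)` of the
`M(2q+1) × M` grid, so the cluster lies on the horizontal midline of cell `(u, v)` of the
`M × M` grid. -/
def voter (q M : ℕ) (t : (Fin M × Fin M) × Fin (2 * q + 1)) : Plane :=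
  cellCenter (M * (2 * q + 1)) M (finProdFinEquiv (t.1.1, t.2)) t.1.2

theorem voter_injective (q M : ℕ) : Function.Injective (voter q M) := by
  rintro ⟨⟨u, v⟩, j⟩ ⟨⟨u', v'⟩, j'⟩ h
  obtain ⟨h1, h2⟩ := Prod.mk.inj (cellCenter_injective _ _ h)
  obtain ⟨rfl, rfl⟩ := Prod.mk.inj (finProdFinEquiv.injective h1)
  cases h2
  rfl

theorem voter_mem_unitSq {q M : ℕ} (t : (Fin M × Fin M) × Fin (2 * q + 1)) :
    voter q M t ∈ unitSq :=
  cellCenter_mem_unitSq _ _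

theorem dist_voter_cellCenter_le {q M : ℕ} (s : Fin M × Fin M) (j : Fin (2 * q + 1)) :
    dist (voter q M (s, j)) (cellCenter M M s.1 s.2) ≤ 1 / (2 * M) := by
  have hM : (0 : ℝ) < M := by exact_mod_cast Fin.pos s.1
  have hj : (j : ℝ) + 1 ≤ 2 * q + 1 := by exact_mod_cast j.isLt
  have hj0 : (0 : ℝ) ≤ j := Nat.cast_nonneg _
  have hdiff : ((finProdFinEquiv (s.1, j) : ℝ) + 1 / 2) / ↑(M * (2 * q + 1))
      - ((s.1 : ℝ) + 1 / 2) / M = ((j : ℝ) - q) / (M * (2 * q + 1)) := by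
    simp only [finProdFinEquiv_apply_val]
    push_cast
    field_simp
    ring
  rw [EuclideanSpace.dist_eq, Fin.sum_univ_two, Real.sqrt_le_left (by positivity)]
  simp only [voter, cellCenter, Real.dist_eq, sq_abs, Matrix.cons_val_zero, Matrix.cons_val_one]
  rw [hdiff, sub_self, zero_pow two_ne_zero, add_zero]
  apply sq_le_sq'
  · rw [← neg_div, div_le_div_iff₀ (by positivity) (by positivity)]
    nlinarith [mul_nonneg hj0 hM.le]
  · rw [div_le_div_iff₀ (by positivity) (by positivity)]
    nlinarith [mul_le_mul_of_nonneg_left hj hM.le]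

def partyA (q M : ℕ) : Set Plane := voter q M '' {t | (t.2 : ℕ) ≤ q}

def partyB (q M : ℕ) : Set Plane := voter q M '' {t | q < (t.2 : ℕ)}

theorem partyA_finite (q M : ℕ) : (partyA q M).Finite := (toFinite _).image _

theorem partyB_finite (q M : ℕ) : (partyB q M).Finite := (toFinite _).image _

theorem disjoint_partyA_partyB (q M : ℕ) : Disjoint (partyA q M) (partyB q M) := by
  rw [partyA, partyB, disjoint_image_iff (voter_injective q M)]
  exact disjoint_left.2 fun t (h1 : (t.2 : ℕ) ≤ q) h2 => h1.not_gt h2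

theorem partyA_subset_unitSq (q M : ℕ) : partyA q M ⊆ unitSq :=
  image_subset_iff.2 fun t _ => voter_mem_unitSq t

theorem partyB_subset_unitSq (q M : ℕ) : partyB q M ⊆ unitSq :=
  image_subset_iff.2 fun t _ => voter_mem_unitSq t

theorem ncard_partyA (q M : ℕ) : (partyA q M).ncard = M * M * (q + 1) := by
  classical
  rw [← inter_univ (partyA q M), partyA,
    ncard_image_inter_eq_sum (voter_injective q M) (fun j : Fin _ => (j : ℕ) ≤ q)]
  simp [card_filter_val_le]

theorem ncard_partyB (q M : ℕ) : (partyB q M).ncard = M * M * q := by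
  classical
  rw [← inter_univ (partyB q M), partyB,
    ncard_image_inter_eq_sum (voter_injective q M) (fun j : Fin _ => q < (j : ℕ))]
  simp [card_filter_lt_val]

theorem ncard_partyA_union_partyB (q M : ℕ) :
    (partyA q M ∪ partyB q M).ncard = M * M * (2 * q + 1) := by
  rw [ncard_union_eq (disjoint_partyA_partyB q M) (partyA_finite q M) (partyB_finite q M),
    ncard_partyA, ncard_partyB]
  ring

theorem abs_ncard_partyA_sub_ncard_partyB_lt {q M : ℕ} (hM : 0 < M) {β : ℝ}
    (hβ : 1 / (2 * q + 1) < β) :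
    |((partyA q M).ncard : ℝ) - (partyB q M).ncard| < β * (partyA q M ∪ partyB q M).ncard := by
  rw [ncard_partyA_union_partyB, ncard_partyA, ncard_partyB]
  push_cast
  have hβ' : 1 < (2 * q + 1) * β := (div_lt_iff₀' (by positivity)).1 hβ
  rw [show (M : ℝ) * M * (q + 1) - M * M * q = M * M by ring, abs_of_pos (by positivity)]
  nlinarith [mul_pos (Nat.cast_pos.2 hM) (Nat.cast_pos.2 hM : (0 : ℝ) < M)]

def Splits (q M : ℕ) (D : Set Plane) (s : Fin M × Fin M) : Prop :=
  (∃ j, voter q M (s, j) ∈ D) ∧ ∃ j, voter q M (s, j) ∉ D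

open Classical in
theorem ncard_partyB_inter_lt {q M : ℕ} {D : Set Plane}
    (h : (2 * q + 1) * (q + 1) * (Finset.univ.filter (Splits q M D)).card
      < ((partyA q M ∪ partyB q M) ∩ D).ncard) :
    (partyB q M ∩ D).ncard < (partyA q M ∩ D).ncard := by
  have hAB : partyA q M ∪ partyB q M = voter q M '' {t | True} := by
    rw [partyA, partyB, ← image_union]
    congr
    ext t
    simp [le_or_gt]
  have hcount := ncard_image_inter_eq_sum (voter_injective q M)
  have hmargin : ((partyA q M ∪ partyB q M) ∩ D).ncard + (2 * q + 1) * (partyB q M ∩ D).ncard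
      ≤ (2 * q + 1) * (partyA q M ∩ D).ncard
        + (2 * q + 1) * (q + 1) * (Finset.univ.filter (Splits q M D)).card := by
    rw [hAB, partyA, partyB, hcount (fun _ => True), hcount (fun j : Fin _ => (j : ℕ) ≤ q),
      hcount (fun j : Fin _ => q < (j : ℕ)), Finset.card_filter]
    simp only [Finset.mul_sum, ← Finset.sum_add_distrib, and_true]
    exact Finset.sum_le_sum fun s _ =>
      card_filter_add_mul_le q _ fun h h' => (if_pos (show Splits q M D s from ⟨h, h'⟩)).ge
  exact Nat.lt_of_mul_lt_mul_left (a := 2 * q + 1) (by omega)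

open Classical in
theorem card_splits_le {q M : ℕ} (hM : 0 < M) {D : Set Plane} (hD : D ⊆ unitSq) {P : ℝ}
    (hP : 0 ≤ P) (htube : ∀ r : ℝ, 0 < r →
      (volume (cthickening r (frontier D))).toReal ≤ 2 * P * r + Real.pi * r ^ 2) :
    ((Finset.univ.filter (Splits q M D)).card : ℝ) ≤ 3 * P * M + 4 := by
  set ρ : ℝ := 1 / (2 * M)
  have hM' : (0 : ℝ) < M := by exact_mod_cast hM
  have hρ : 0 < ρ := by positivity
  have hρM : 2 * M * ρ = 1 := by simp only [ρ]; field_simp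
  have hpack := card_mul_le_of_mem_cthickening_frontier (isBounded_unitSq.subset hD) hρ.le
    hρ.le (htube _ (by positivity)) (Finset.univ.filter (Splits q M D))
    (fun s => cellCenter M M s.1 s.2)
    (fun s _ s' _ hss' => by
      rw [show 2 * ρ = 1 / M by simp only [ρ]; field_simp]
      exact inv_le_dist_cellCenter hss')
    (fun s hs => by
      obtain ⟨⟨j, hj⟩, ⟨j', hj'⟩⟩ := (Finset.mem_filter.1 hs).2
      exact mem_cthickening_frontier_of_mem_closedBall
        (mem_closedBall.2 (dist_voter_cellCenter_le s j))
        (mem_closedBall.2 (dist_voter_cellCenter_le s j')) hj hj')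
  set n : ℝ := ((Finset.univ.filter (Splits q M D)).card : ℝ)
  clear_value ρ n
  have hn : n * Real.pi ≤ 8 * P * M + 4 * Real.pi := by
    refine le_of_mul_le_mul_right ?_ (by positivity : 0 < ρ ^ 2)
    linear_combination hpack - (4 * P * ρ) * hρM
  have hπ := Real.pi_gt_three
  nlinarith [mul_nonneg hP hM'.le]

theorem ncard_partyB_inter_lt_of_perimeter {q M : ℕ} (hM : 0 < M) {C : ℝ} (hC : 0 ≤ C)
    {D : Set Plane} (hD : D ⊆ unitSq) {P : ℝ} (hP : 0 ≤ P) (htube : ∀ r : ℝ, 0 < r →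
      (volume (cthickening r (frontier D))).toReal ≤ 2 * P * r + Real.pi * r ^ 2)
    (hPC : P ^ 2 ≤ C * (volume D).toReal)
    (hpop : (2 * q + 1) * (q + 1) * (3 * √(C * (volume unitSq).toReal) * M + 4)
      < (((partyA q M ∪ partyB q M) ∩ D).ncard : ℝ)) :
    (partyB q M ∩ D).ncard < (partyA q M ∩ D).ncard := by
  classical
  have hvol : (volume D).toReal ≤ (volume unitSq).toReal :=
    ENNReal.toReal_mono isBounded_unitSq.measure_lt_top.ne (measure_mono hD)
  have hPle : P ≤ √(C * (volume unitSq).toReal) :=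
    (le_abs_self P).trans (Real.abs_le_sqrt (hPC.trans (mul_le_mul_of_nonneg_left hvol hC)))
  refine ncard_partyB_inter_lt ?_
  have hsplit := card_splits_le (q := q) hM hD hP htube
  have hK : (0 : ℝ) ≤ (2 * q + 1) * (q + 1) := by positivity
  exact_mod_cast (mul_le_mul_of_nonneg_left hsplit hK).trans_lt <| lt_of_le_of_lt
    (mul_le_mul_of_nonneg_left (by gcongr) hK) hpop

theorem effGap_partyA_partyB_le {q M : ℕ} (hM : 0 < M) {k : ℕ} {D : Fin k → Set Plane}
    (hD : Pairwise fun i j => Disjoint (D i) (D j)) (hcover : (⋃ i, D i) = unitSq)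
    (hwin : ∀ i, (partyB q M ∩ D i).ncard < (partyA q M ∩ D i).ncard) :
    effGap (partyA q M) (partyB q M) D ≤ 1 / (2 * q + 1) - 1 / 2 := by
  refine (effGap_le_of_forall_lt (partyA_finite q M) (partyB_finite q M) hD
    (hcover ▸ union_subset (partyA_subset_unitSq q M) (partyB_subset_unitSq q M)) hwin).trans
    (le_of_eq ?_)
  rw [ncard_partyA_union_partyB, ncard_partyA, ncard_partyB]
  push_cast
  field_simp
  ring

theorem exists_nat_mul_add_lt_mul_sq {a : ℝ} (ha : 0 < a) (b c : ℝ) :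
    ∃ M : ℕ, 0 < M ∧ b * M + c < a * M ^ 2 := by
  obtain ⟨M, hM⟩ := exists_nat_gt ((|b| + |c|) / a + 1)
  have hbc : 0 ≤ (|b| + |c|) / a := by positivity
  have hM1 : (1 : ℝ) < M := by linarith
  have haM : |b| + |c| < M * a := (div_lt_iff₀ ha).1 (by linarith)
  refine ⟨M, by exact_mod_cast zero_lt_one.trans hM1, ?_⟩
  nlinarith [le_abs_self b, le_abs_self c, abs_nonneg b, abs_nonneg c]

theorem impossibility_minkowski_general (δ C α β : ℝ) (hδ1 : δ < 1) (hC : 0 < C)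
    (hα0 : 0 < α) (hβ : 0 < β) (k : ℕ) (hk : 1 ≤ k) :
    ∃ A B : Set Plane, A.Finite ∧ B.Finite ∧ Disjoint A B ∧ A ⊆ unitSq ∧ B ⊆ unitSq ∧
      (A ∪ B).Nonempty ∧ |(A.ncard : ℝ) - (B.ncard : ℝ)| < β * ((A ∪ B).ncard : ℝ) ∧
      ∀ D : Fin k → Set Plane,
        (∀ i, MeasurableSet (D i)) →
        (Pairwise fun i j => Disjoint (D i) (D j)) →
        (⋃ i, D i) = unitSq →
        (∀ i, (1 - δ) * (⌊((A ∪ B).ncard : ℝ) / (k : ℝ)⌋ : ℝ)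
                ≤ (((A ∪ B) ∩ D i).ncard : ℝ) ∧
              (((A ∪ B) ∩ D i).ncard : ℝ)
                ≤ (1 + δ) * (⌈((A ∪ B).ncard : ℝ) / (k : ℝ)⌉ : ℝ)) →
        (∀ i, ∃ P : ℝ, 0 ≤ P ∧
            (∀ r : ℝ, 0 < r →
              (volume (Metric.cthickening r (frontier (D i)))).toReal
                ≤ 2 * P * r + Real.pi * r ^ 2) ∧
            P ^ 2 ≤ C * (volume (D i)).toReal) →
        (∀ i, (B ∩ D i).ncard < (A ∩ D i).ncard) ∧
        effGap A B D ≤ -(1 / 2 - α) := by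
  obtain ⟨q, hq⟩ := exists_nat_gt (max (1 / α) (1 / β))
  have hq1 : (0 : ℝ) < 2 * q + 1 := by positivity
  have hqα : 1 / (2 * q + 1) < α :=
    (one_div_lt hq1 hα0).2 (by linarith [le_max_left (1 / α) (1 / β)])
  have hqβ : 1 / (2 * q + 1) < β :=
    (one_div_lt hq1 hβ).2 (by linarith [le_max_right (1 / α) (1 / β)])
  set K : ℝ := (2 * q + 1) * (q + 1)
  set Λ := √(C * (volume unitSq).toReal)
  obtain ⟨M, hM, hMbig⟩ := exists_nat_mul_add_lt_mul_sq
    (div_pos (mul_pos (sub_pos.2 hδ1) hq1) (by exact_mod_cast hk : (0 : ℝ) < k))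
    (3 * K * Λ) (4 * K + (1 - δ))
  have hMlarge : K * (3 * Λ * M + 4) < (1 - δ) * (((M * M * (2 * q + 1) : ℕ) : ℝ) / k - 1) := by
    have hring : (1 - δ) * ((M * M * (2 * q + 1) : ℝ) / k - 1)
        = (1 - δ) * (2 * q + 1) / k * M ^ 2 - (1 - δ) := by ring
    push_cast
    linarith
  have hN := ncard_partyA_union_partyB q M
  refine ⟨partyA q M, partyB q M, partyA_finite q M, partyB_finite q M,
    disjoint_partyA_partyB q M, partyA_subset_unitSq q M, partyB_subset_unitSq q M,
    nonempty_of_ncard_ne_zero (by rw [hN]; positivity),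
    abs_ncard_partyA_sub_ncard_partyB_lt hM hqβ, fun D _ hD hcover hpop hper => ?_⟩
  have hwin (i : Fin k) : (partyB q M ∩ D i).ncard < (partyA q M ∩ D i).ncard := by
    obtain ⟨P, hP, htube, hPC⟩ := hper i
    refine ncard_partyB_inter_lt_of_perimeter hM hC.le (hcover ▸ subset_iUnion D i) hP htube
      hPC ?_
    calc _ < _ := hMlarge
      _ ≤ (1 - δ) * ⌊((M * M * (2 * q + 1) : ℕ) : ℝ) / k⌋ :=
        mul_le_mul_of_nonneg_left (Int.sub_one_lt_floor _).le (sub_nonneg.2 hδ1.le)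
      _ ≤ _ := hN ▸ (hpop i).1
  exact ⟨hwin, (effGap_partyA_partyB_le hM hD hcover hwin).trans (by linarith)⟩

/-- **Impossibility theorem (Theorem 1 of the paper).**
For all parameters `δ ∈ [0,1)`, `C > 0`, `α ∈ (0,1/2)`, `β > 0` and `k ≥ 1` there exist
disjoint finite sets of voters `A, B ⊆ [0,1]²` with nearly balanced counts
(`||A| - |B|| < β|A ∪ B|`) such that any measurable partition of `[0,1]²` into districts
`D₁, …, D_k` satisfying the one-person-one-vote condition with parameter `δ` and the
Polsby–Popper compactness condition (a Minkowski-type tube bound defining the perimeter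
`P i` of each district, with `P i ^ 2 ≤ C · vol (D i)`) is swept by `A`, and its efficiency
gap is at most `-(1/2 - α)`. -/
theorem impossibility_minkowski (δ C α β : ℝ) (hδ0 : 0 ≤ δ) (hδ1 : δ < 1) (hC : 0 < C)
    (hα0 : 0 < α) (hα : α < 1 / 2) (hβ : 0 < β) (k : ℕ) (hk : 1 ≤ k) :
    ∃ A B : Set Plane, A.Finite ∧ B.Finite ∧ Disjoint A B ∧ A ⊆ unitSq ∧ B ⊆ unitSq ∧
      (A ∪ B).Nonempty ∧ |(A.ncard : ℝ) - (B.ncard : ℝ)| < β * ((A ∪ B).ncard : ℝ) ∧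
      ∀ D : Fin k → Set Plane,
        (∀ i, MeasurableSet (D i)) →
        (Pairwise fun i j => Disjoint (D i) (D j)) →
        (⋃ i, D i) = unitSq →
        (∀ i, (1 - δ) * (⌊((A ∪ B).ncard : ℝ) / (k : ℝ)⌋ : ℝ)
                ≤ (((A ∪ B) ∩ D i).ncard : ℝ) ∧
              (((A ∪ B) ∩ D i).ncard : ℝ)
                ≤ (1 + δ) * (⌈((A ∪ B).ncard : ℝ) / (k : ℝ)⌉ : ℝ)) →
        (∀ i, ∃ P : ℝ, 0 ≤ P ∧
            (∀ r : ℝ, 0 < r →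
              (volume (Metric.cthickening r (frontier (D i)))).toReal
                ≤ 2 * P * r + Real.pi * r ^ 2) ∧
            P ^ 2 ≤ C * (volume (D i)).toReal) →
        (∀ i, (B ∩ D i).ncard < (A ∩ D i).ncard) ∧
        effGap A B D ≤ -(1 / 2 - α) :=
  impossibility_minkowski_general δ C α β hδ1 hC hα0 hβ k hk

end
end

section
/- Let L ≥ 0, let f : ℝ → ℝ² be 1-Lipschitz on the interval [0, L], and let r ≥ 0. Then vol(cthickening(r, f '' [0, L])) ≤ 2·L·r + π·r². -/
/-!
Approximate the curve by the polygon through the points `f (i L / (n + 1))`, `i ≤ n + 1`.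
Every point of the curve lies within `δ = L / (n + 1)` of a vertex, so the `r`-thickening of the
curve is covered by the `(r + δ)`-thickenings of the edges. The thickening of a segment of length
`ℓ` by `ρ` is a stadium: a `2ℓρ` rectangle plus two half discs that together form one disc,
so its area is at most `2ℓρ + πρ²`. Consecutive stadiums share the full disc around their common
vertex, hence the polygon's thickening has area at most `2ρ · (total length) + πρ² ≤ 2Lρ + πρ²`.
Letting `n → ∞` gives the bound with `ρ = r`.
-/

open MeasureTheory Metric Set ENNReal

open scoped Pointwise

noncomputable section

theorem isCompact_segment {E : Type*} [AddCommGroup E] [Module ℝ E] [TopologicalSpace E]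
    [IsTopologicalAddGroup E] [ContinuousSMul ℝ E] (x y : E) : IsCompact (segment ℝ x y) := by
  rw [segment_eq_image_lineMap]
  exact isCompact_Icc.image AffineMap.lineMap_continuous

theorem MeasureTheory.measure_union_add_le_of_subset_inter {α : Type*} [MeasurableSpace α]
    {μ : Measure α} {s t u : Set α} (ht : MeasurableSet t) (h : u ⊆ s ∩ t) :
    μ (s ∪ t) + μ u ≤ μ s + μ t :=
  measure_union_add_inter s ht ▸ add_le_add_right (measure_mono h) _

theorem EuclideanSpace.volume_setOf_forall_mem {ι : Type*} [Fintype ι] (s : ι → Set ℝ) :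
    volume {x : EuclideanSpace ℝ ι | ∀ i, x i ∈ s i} = ∏ i, volume (s i) := by
  have : {x : EuclideanSpace ℝ ι | ∀ i, x i ∈ s i} =
      (MeasurableEquiv.toLp 2 (ι → ℝ)).symm ⁻¹' univ.pi s := by
    ext x; simp
  rw [this, (EuclideanSpace.volume_preserving_symm_measurableEquiv_toLp ι).measure_preimage_equiv,
    volume_pi_pi]

section Transport
variable {E F : Type*} [NormedAddCommGroup E] [InnerProductSpace ℝ E] [FiniteDimensional ℝ E]
  [MeasurableSpace E] [BorelSpace E] [NormedAddCommGroup F] [InnerProductSpace ℝ F]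
  [FiniteDimensional ℝ F] [MeasurableSpace F] [BorelSpace F]

theorem AffineIsometryEquiv.measurePreserving (φ : E ≃ᵃⁱ[ℝ] F) : MeasurePreserving φ := by
  have : ⇑φ = (· + φ 0) ∘ φ.linearIsometryEquiv := by
    ext x
    simpa using φ.map_vadd 0 x
  rw [this]
  exact (measurePreserving_add_right volume (φ 0)).comp φ.linearIsometryEquiv.measurePreserving

theorem AffineIsometryEquiv.volume_cthickening_image (φ : E ≃ᵃⁱ[ℝ] F) (δ : ℝ) (s : Set E) :
    volume (cthickening δ (φ '' s)) = volume (cthickening δ s) := by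
  have : φ ⁻¹' cthickening δ (φ '' s) = cthickening δ s := by
    ext x
    simp only [mem_preimage, mem_cthickening_iff, Metric.infEDist_image φ.isometry]
  rw [← this, φ.measurePreserving.measure_preimage isClosed_cthickening.nullMeasurableSet]

theorem volume_cthickening_segment_eq (a c e : E) (he : ‖e‖ = 1) (δ : ℝ) :
    volume (cthickening δ (segment ℝ a c)) =
      volume (cthickening δ (segment ℝ 0 (dist a c • e))) := by
  set Q := (ℝ ∙ ((c - a) - dist a c • e))ᗮ.reflection
  have hQ : Q (c - a) = dist a c • e :=
    Submodule.reflection_sub <| by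
      rw [norm_smul, he, mul_one, Real.norm_of_nonneg dist_nonneg, dist_eq_norm_sub']
  let φ : E ≃ᵃⁱ[ℝ] E := (AffineIsometryEquiv.vaddConst ℝ a).symm.trans Q.toAffineIsometryEquiv
  have : φ '' segment ℝ a c = segment ℝ 0 (dist a c • e) := by
    have h := image_segment ℝ φ.toAffineEquiv.toAffineMap a c
    simp only [AffineEquiv.coe_toAffineMap, AffineIsometryEquiv.coe_toAffineEquiv] at h
    rw [h]
    simp [φ, hQ]
  rw [← this, φ.volume_cthickening_image]

end Transport

theorem Plane.dist_sq (x y : Plane) : dist x y ^ 2 = (x 0 - y 0) ^ 2 + (x 1 - y 1) ^ 2 := by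
  simp [EuclideanSpace.dist_sq_eq, Fin.sum_univ_two, Real.dist_eq, sq_abs]

theorem Plane.dist_le_iff {x y : Plane} {ρ : ℝ} (hρ : 0 ≤ ρ) :
    dist x y ≤ ρ ↔ (x 0 - y 0) ^ 2 + (x 1 - y 1) ^ 2 ≤ ρ ^ 2 := by
  rw [← Plane.dist_sq, pow_le_pow_iff_left₀ dist_nonneg hρ two_ne_zero]

theorem volume_closedBall_plane (x : Plane) {ρ : ℝ} (hρ : 0 ≤ ρ) :
    volume (closedBall x ρ) = ENNReal.ofReal (Real.pi * ρ ^ 2) := by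
  rw [EuclideanSpace.volume_closedBall_fin_two, ← ENNReal.ofReal_pow hρ,
    ← ENNReal.ofReal_mul (by positivity), mul_comm]

theorem cthickening_segment_single_subset {ℓ ρ : ℝ} (hℓ : 0 ≤ ℓ) (hρ : 0 ≤ ρ) :
    cthickening ρ (segment ℝ (0 : Plane) (ℓ • EuclideanSpace.single 0 1)) ⊆
      (closedBall (0 : Plane) ρ ∩ {x | x 0 < 0}) ∪
        {x : Plane | ∀ i, x i ∈ ![Icc 0 ℓ, Icc (-ρ) ρ] i} ∪
        ((ℓ • EuclideanSpace.single 0 1 : Plane) +ᵥ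
          (closedBall (0 : Plane) ρ ∩ {x | 0 < x 0})) := by
  intro x hx
  rw [(isCompact_segment _ _).cthickening_eq_biUnion_closedBall hρ, segment_eq_image] at hx
  obtain ⟨_, ⟨θ, hθ, rfl⟩, hxy⟩ := mem_iUnion₂.mp hx
  replace hxy : (x 0 - θ * ℓ) ^ 2 + x 1 ^ 2 ≤ ρ ^ 2 := by
    simpa [Plane.dist_le_iff hρ] using hxy
  have hθℓ : 0 ≤ θ * ℓ ∧ θ * ℓ ≤ ℓ := ⟨mul_nonneg hθ.1 hℓ, mul_le_of_le_one_left hℓ hθ.2⟩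
  rcases lt_or_ge (x 0) 0 with h0 | h0
  · have hx0 : x 0 ^ 2 + x 1 ^ 2 ≤ ρ ^ 2 := by nlinarith
    exact .inl (.inl ⟨mem_closedBall.2 ((Plane.dist_le_iff hρ).2 (by simpa using hx0)), h0⟩)
  rcases le_or_gt (x 0) ℓ with hxℓ | hxℓ
  · have hx1 : -ρ ≤ x 1 ∧ x 1 ≤ ρ := abs_le_of_sq_le_sq' (by nlinarith) hρ
    exact .inl (.inr (by simpa [Fin.forall_fin_two] using ⟨⟨h0, hxℓ⟩, hx1⟩))
  · have hxv : (-ℓ + x 0) ^ 2 + x 1 ^ 2 ≤ ρ ^ 2 := by nlinarith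
    exact .inr (mem_vadd_set_iff_neg_vadd_mem.mpr
      ⟨mem_closedBall.2 ((Plane.dist_le_iff hρ).2 (by simpa using hxv)), by simpa using hxℓ⟩)

theorem volume_cthickening_segment_single_le {ℓ ρ : ℝ} (hℓ : 0 ≤ ℓ) (hρ : 0 ≤ ρ) :
    volume (cthickening ρ (segment ℝ (0 : Plane) (ℓ • EuclideanSpace.single 0 1))) ≤
      ENNReal.ofReal (2 * ℓ * ρ + Real.pi * ρ ^ 2) := by
  have hR : volume {x : Plane | ∀ i, x i ∈ ![Icc 0 ℓ, Icc (-ρ) ρ] i} =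
      ENNReal.ofReal (2 * ℓ * ρ) := by
    rw [EuclideanSpace.volume_setOf_forall_mem, Fin.prod_univ_two]
    simp only [Matrix.cons_val_zero, Matrix.cons_val_one, Real.volume_Icc]
    rw [sub_zero, ← ENNReal.ofReal_mul hℓ]
    ring_nf
  have hD : volume (closedBall (0 : Plane) ρ ∩ {x | x 0 < 0}) +
      volume (closedBall (0 : Plane) ρ ∩ {x | 0 < x 0}) ≤ ENNReal.ofReal (Real.pi * ρ ^ 2) := by
    rw [← measure_union]
    · calc _ ≤ volume (closedBall (0 : Plane) ρ) :=
            measure_mono (union_subset inter_subset_left inter_subset_left)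
        _ = _ := volume_closedBall_plane 0 hρ
    · exact Disjoint.mono inter_subset_right inter_subset_right
        (disjoint_left.mpr fun x (h : x 0 < 0) (h' : 0 < x 0) => h.not_gt h')
    · exact measurableSet_closedBall.inter (measurableSet_lt measurable_const (by fun_prop))
  calc _ ≤ _ := measure_mono (cthickening_segment_single_subset hℓ hρ)
    _ ≤ _ := measure_union_le _ _
    _ ≤ _ := add_le_add_left (measure_union_le _ _) _
    _ = _ := by rw [measure_vadd]
    _ ≤ ENNReal.ofReal (Real.pi * ρ ^ 2) + ENNReal.ofReal (2 * ℓ * ρ) := by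
      rw [hR, add_right_comm]; exact add_le_add_left hD _
    _ = _ := by rw [← ENNReal.ofReal_add (by positivity) (by positivity), add_comm]

theorem volume_cthickening_segment_le (a c : Plane) {ρ : ℝ} (hρ : 0 ≤ ρ) :
    volume (cthickening ρ (segment ℝ a c)) ≤
      ENNReal.ofReal (2 * dist a c * ρ + Real.pi * ρ ^ 2) := by
  rw [volume_cthickening_segment_eq a c (EuclideanSpace.single 0 1) (by simp)]
  exact volume_cthickening_segment_single_le dist_nonneg hρ

theorem volume_biUnion_cthickening_segment_le (g : ℕ → Plane) {ρ : ℝ} (hρ : 0 ≤ ρ) (n : ℕ) :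
    volume (⋃ i ∈ Finset.range (n + 1), cthickening ρ (segment ℝ (g i) (g (i + 1)))) ≤
      ENNReal.ofReal (2 * (∑ i ∈ Finset.range (n + 1), dist (g i) (g (i + 1))) * ρ +
        Real.pi * ρ ^ 2) := by
  induction n with
  | zero => simpa using volume_cthickening_segment_le (g 0) (g 1) hρ
  | succ n ih =>
    set U := ⋃ i ∈ Finset.range (n + 1), cthickening ρ (segment ℝ (g i) (g (i + 1)))
    set T := cthickening ρ (segment ℝ (g (n + 1)) (g (n + 2)))
    have hjoint : closedBall (g (n + 1)) ρ ⊆ U ∩ T :=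
      subset_inter
        ((closedBall_subset_cthickening (right_mem_segment ℝ _ _) ρ).trans
          (subset_biUnion_of_mem (u := fun i => cthickening ρ (segment ℝ (g i) (g (i + 1))))
            (Finset.self_mem_range_succ n)))
        (closedBall_subset_cthickening (left_mem_segment ℝ _ _) ρ)
    have hpi : ENNReal.ofReal (Real.pi * ρ ^ 2) ≠ ⊤ := ENNReal.ofReal_ne_top
    rw [Finset.range_add_one, Finset.set_biUnion_insert, union_comm,
      ← ENNReal.add_le_add_iff_right hpi]
    calc volume (U ∪ T) + ENNReal.ofReal (Real.pi * ρ ^ 2)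
        ≤ volume U + volume T := by
          rw [← volume_closedBall_plane (g (n + 1)) hρ]
          exact measure_union_add_le_of_subset_inter isClosed_cthickening.measurableSet hjoint
      _ ≤ ENNReal.ofReal (2 * (∑ i ∈ Finset.range (n + 1), dist (g i) (g (i + 1))) * ρ +
              Real.pi * ρ ^ 2) +
            ENNReal.ofReal (2 * dist (g (n + 1)) (g (n + 2)) * ρ + Real.pi * ρ ^ 2) :=
          add_le_add ih (volume_cthickening_segment_le _ _ hρ)
      _ = _ := by
        rw [Finset.sum_insert Finset.notMem_range_self, ← ENNReal.ofReal_add, ← ENNReal.ofReal_add]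
        · ring_nf
        all_goals positivity

theorem exists_mem_Icc_nat_mul {δ t : ℝ} (n : ℕ) (ht : t ∈ Icc 0 ((n + 1) * δ)) :
    ∃ i ≤ n, t ∈ Icc (i * δ) ((i + 1) * δ) := by
  induction n with
  | zero => exact ⟨0, le_rfl, by simpa using ht⟩
  | succ n ih =>
    rcases le_or_gt t ((n + 1) * δ) with h | h
    · obtain ⟨i, hi, hti⟩ := ih ⟨ht.1, h⟩
      exact ⟨i, hi.trans n.le_succ, hti⟩
    · push_cast at ht
      exact ⟨n + 1, le_rfl, by push_cast; exact ⟨h.le, ht.2⟩⟩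

theorem volume_cthickening_image_le {L r : ℝ} (hL : 0 ≤ L) (hr : 0 ≤ r) {f : ℝ → Plane}
    (hf : LipschitzOnWith 1 f (Icc 0 L)) (n : ℕ) :
    volume (cthickening r (f '' Icc 0 L)) ≤
      ENNReal.ofReal (2 * L * (r + L / (n + 1)) + Real.pi * (r + L / (n + 1)) ^ 2) := by
  set δ := L / (n + 1)
  have hδ : 0 ≤ δ := by positivity
  have hnδ : (n + 1) * δ = L := mul_div_cancel₀ L (by positivity)
  set g : ℕ → Plane := fun i => f (i * δ)
  have hgrid {i : ℕ} (hi : i ≤ n + 1) : (i : ℝ) * δ ∈ Icc 0 L :=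
    ⟨by positivity, hnδ ▸ mul_le_mul_of_nonneg_right (by exact_mod_cast hi) hδ⟩
  have hfδ {s t : ℝ} (hs : s ∈ Icc 0 L) (ht : t ∈ Icc 0 L) (hst : |s - t| ≤ δ) :
      dist (f s) (f t) ≤ δ := by
    simpa using (hf.dist_le_mul s hs t ht).trans (by simpa [Real.dist_eq] using hst)
  have hcover : cthickening r (f '' Icc 0 L) ⊆
      ⋃ i ∈ Finset.range (n + 1), cthickening (r + δ) (segment ℝ (g i) (g (i + 1))) := by
    rw [(isCompact_Icc.image_of_continuousOn hf.continuousOn).cthickening_eq_biUnion_closedBall hr]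
    intro x hx
    obtain ⟨_, ⟨t, ht, rfl⟩, hx⟩ := mem_iUnion₂.mp hx
    obtain ⟨i, hi, hti⟩ := exists_mem_Icc_nat_mul n (by rwa [hnδ])
    have hfti : dist (f t) (g i) ≤ δ :=
      hfδ ht (hgrid (by omega)) (abs_le.mpr ⟨by linarith [hti.1], by linarith [hti.2]⟩)
    refine mem_biUnion (Finset.mem_range.mpr (Nat.lt_succ_of_le hi))
      (mem_cthickening_of_dist_le x (g i) _ _ (left_mem_segment ℝ _ _) ?_)
    exact (dist_triangle x (f t) (g i)).trans (add_le_add (mem_closedBall.mp hx) hfti)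
  have hsum : ∑ i ∈ Finset.range (n + 1), dist (g i) (g (i + 1)) ≤ L := by
    refine (Finset.sum_le_card_nsmul _ _ δ fun i hi => ?_).trans_eq ?_
    · have hi := Finset.mem_range.mp hi
      exact hfδ (hgrid (by omega)) (hgrid (by omega))
        (by push_cast; rw [abs_le]; constructor <;> linarith)
    · rw [Finset.card_range, nsmul_eq_mul, ← hnδ]
      push_cast
      ring
  calc _ ≤ _ := measure_mono hcover
    _ ≤ _ := volume_biUnion_cthickening_segment_le g (by positivity) n
    _ ≤ _ := by gcongr

/-- **Tube-volume estimate.** The closed `r`-thickening of a curve parametrized by a map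
that is `1`-Lipschitz on `[0, L]` has area at most `2Lr + πr²`. -/
theorem tube_volume_le (L : ℝ) (hL : 0 ≤ L) (f : ℝ → Plane)
    (hf : LipschitzOnWith 1 f (Set.Icc 0 L)) (r : ℝ) (hr : 0 ≤ r) :
    volume (Metric.cthickening r (f '' Set.Icc 0 L)) ≤
      ENNReal.ofReal (2 * L * r + Real.pi * r ^ 2) := by
  have hρ : Filter.Tendsto (fun n : ℕ => r + L / (n + 1)) Filter.atTop (nhds r) := by
    simpa [div_eq_mul_inv] using
      tendsto_const_nhds.add ((tendsto_one_div_add_atTop_nhds_zero_nat).const_mul L)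
  have hbound : Continuous fun ρ : ℝ => ENNReal.ofReal (2 * L * ρ + Real.pi * ρ ^ 2) :=
    ENNReal.continuous_ofReal.comp (by fun_prop)
  exact ge_of_tendsto ((hbound.tendsto r).comp hρ)
    (Filter.Eventually.of_forall (volume_cthickening_image_le hL hr hf))

end
end

section
/- Let S ⊆ ℝ² be a compact set and let r > 0. Then vol(cthickening(r, S)) ≥ 2·r·λ₁(π₁(S)), where π₁(S) = {x : (x, y) ∈ S for some y} is the projection of S onto the first coordinate and λ₁ denotes one-dimensional Lebesgue measure. -/
/-!
Cavalieri: above every point `p 0` of the projection, the vertical slice of the closed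
`r`-thickening contains the segment of length `2r` centred at `p 1`, so integrating slice
lengths over the projection gives the bound.
-/

open MeasureTheory Metric Set ENNReal

noncomputable section

theorem MeasureTheory.Measure.mul_le_prod_of_le_measure_slice {α β : Type*}
    [MeasurableSpace α] [MeasurableSpace β] (μ : Measure α) (ν : Measure β) [SFinite ν]
    {A : Set α} (hA : MeasurableSet A) {B : Set (α × β)} (hB : MeasurableSet B) {c : ℝ≥0∞}
    (hc : ∀ x ∈ A, c ≤ ν (Prod.mk x ⁻¹' B)) :
    c * μ A ≤ μ.prod ν B :=
  calc c * μ A = ∫⁻ _ in A, c ∂μ := (setLIntegral_const A c).symm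
    _ ≤ ∫⁻ x in A, ν (Prod.mk x ⁻¹' B) ∂μ := setLIntegral_mono' hA hc
    _ ≤ ∫⁻ x, ν (Prod.mk x ⁻¹' B) ∂μ := setLIntegral_le_lintegral A _
    _ = μ.prod ν B := (Measure.prod_apply hB).symm

theorem EuclideanSpace.dist_eq_of_forall_ne_apply_eq {ι : Type*} [Fintype ι]
    {p q : EuclideanSpace ℝ ι} {i : ι} (h : ∀ j ≠ i, p j = q j) :
    dist p q = dist (p i) (q i) := by
  rw [EuclideanSpace.dist_eq, Finset.sum_eq_single i (fun j _ hj => by simp [h j hj]) (by simp),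
    Real.sqrt_sq dist_nonneg]

theorem Plane.volume_preserving_toLp_pair :
    MeasurePreserving (fun x : ℝ × ℝ => !₂[x.1, x.2]) volume volume :=
  (PiLp.volume_preserving_toLp (Fin 2)).comp (volume_preserving_finTwoArrow ℝ).symm

theorem Plane.Icc_subset_vertical_slice_cthickening {S : Set Plane} {p : Plane} (hp : p ∈ S)
    (r : ℝ) : Icc (p 1 - r) (p 1 + r) ⊆ {t | !₂[p 0, t] ∈ cthickening r S} := by
  intro t ht
  refine mem_cthickening_of_dist_le _ p r S hp ?_
  have hdist : dist !₂[p 0, t] p = dist t (p 1) :=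
    EuclideanSpace.dist_eq_of_forall_ne_apply_eq (i := 1) fun j hj => by
      fin_cases j
      · rfl
      · exact absurd rfl hj
  rw [hdist, Real.dist_eq, abs_sub_le_iff]
  constructor <;> linarith [ht.1, ht.2]

theorem thickening_volume_ge_proj_general (S : Set Plane) (hS : IsCompact S) (r : ℝ) :
    ENNReal.ofReal (2 * r) * volume ((fun x : Plane => x 0) '' S) ≤
      volume (Metric.cthickening r S) := by
  have hpair := Plane.volume_preserving_toLp_pair
  have hproj : MeasurableSet ((fun x : Plane => x 0) '' S) :=
    (hS.image (PiLp.continuous_apply 2 _ 0)).measurableSet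
  rw [← hpair.measure_preimage isClosed_cthickening.nullMeasurableSet, Measure.volume_eq_prod]
  refine Measure.mul_le_prod_of_le_measure_slice _ _ hproj
    (isClosed_cthickening.measurableSet.preimage hpair.measurable) ?_
  rintro _ ⟨p, hp, rfl⟩
  calc ENNReal.ofReal (2 * r) = volume (Icc (p 1 - r) (p 1 + r)) := by
        rw [Real.volume_Icc]; ring_nf
    _ ≤ _ := measure_mono (Plane.Icc_subset_vertical_slice_cthickening hp r)

/-- **Slicing estimate.** For a compact `S ⊆ ℝ²` and `r > 0`, the area of the closed
`r`-thickening of `S` is at least `2r` times the one-dimensional Lebesgue measure of the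
projection of `S` onto the first coordinate. -/
theorem thickening_volume_ge_proj (S : Set Plane) (hS : IsCompact S) (r : ℝ) (hr : 0 < r) :
    ENNReal.ofReal (2 * r) * volume ((fun x : Plane => x 0) '' S) ≤
      volume (Metric.cthickening r S) :=
  thickening_volume_ge_proj_general S hS r

end
end

section
/- Let A, B be disjoint finite sets with A ∪ B nonempty, and let D₁, …, D_k be pairwise disjoint sets covering A ∪ B such that |A ∩ D_i| > |B ∩ D_i| for every i. Define the efficiency gap EG = (Σᵢ (|A ∩ D_i| − ⌈(|A ∩ D_i| + |B ∩ D_i|)/2⌉) − |B|) / (|A| + |B|), as a rational number. Then EG ≤ (|A| − 3·|B|) / (2·(|A| + |B|)). -/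
open Set

noncomputable section

/-- **Efficiency gap of a sweep.** If `A` and `B` are disjoint finite sets covered by the
pairwise disjoint districts `D₁, …, D_k`, and `A` strictly wins every district, then the
efficiency gap `EG = (Σᵢ (|A ∩ Dᵢ| − ⌈(|A ∩ Dᵢ| + |B ∩ Dᵢ|)/2⌉) − |B|)/(|A| + |B|)`
satisfies `EG ≤ (|A| − 3|B|)/(2(|A| + |B|))`. -/
theorem effGap_of_sweep_le {α : Type*} (A B : Set α) (hA : A.Finite) (hB : B.Finite)
    (hAB : Disjoint A B) (hne : (A ∪ B).Nonempty) (k : ℕ) (D : Fin k → Set α)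
    (hdisj : Pairwise fun i j => Disjoint (D i) (D j))
    (hcover : A ∪ B ⊆ ⋃ i, D i)
    (hwin : ∀ i, (B ∩ D i).ncard < (A ∩ D i).ncard) :
    ((∑ i, (((A ∩ D i).ncard : ℚ) -
          (⌈(((A ∩ D i).ncard : ℚ) + ((B ∩ D i).ncard : ℚ)) / 2⌉ : ℚ)))
        - (B.ncard : ℚ)) / ((A.ncard : ℚ) + (B.ncard : ℚ)) ≤
      ((A.ncard : ℚ) - 3 * (B.ncard : ℚ)) / (2 * ((A.ncard : ℚ) + (B.ncard : ℚ))) := by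
  classical
  have hAi : ∀ i, (A ∩ D i).Finite := fun i => hA.inter_of_left _
  have hBi : ∀ i, (B ∩ D i).Finite := fun i => hB.inter_of_left _
  set tA : Fin k → Finset α := fun i => (hAi i).toFinset with htA
  set tB : Fin k → Finset α := fun i => (hBi i).toFinset with htB
  -- ∑ |A ∩ D i| ≤ |A|
  have hsumA : ∑ i, (A ∩ D i).ncard ≤ A.ncard := by
    have hdisj' : ∀ i ∈ Finset.univ, ∀ j ∈ Finset.univ, i ≠ j →
        Disjoint (tA i) (tA j) := by
      intro i _ j _ hij
      simp only [htA, Finset.disjoint_left, Set.Finite.mem_toFinset]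
      intro x hx hx'
      exact (hdisj hij).ne_of_mem hx.2 hx'.2 rfl
    have hcard : ∑ i, (tA i).card = (Finset.univ.biUnion tA).card :=
      (Finset.card_biUnion hdisj').symm
    have hsub : Finset.univ.biUnion tA ⊆ hA.toFinset := by
      intro x hx
      simp only [Finset.mem_biUnion, htA, Set.Finite.mem_toFinset] at hx ⊢
      obtain ⟨i, _, hx⟩ := hx
      exact hx.1
    calc ∑ i, (A ∩ D i).ncard = ∑ i, (tA i).card := by
          refine Finset.sum_congr rfl fun i _ => ?_
          exact Set.ncard_eq_toFinset_card _ (hAi i)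
      _ = (Finset.univ.biUnion tA).card := hcard
      _ ≤ hA.toFinset.card := Finset.card_le_card hsub
      _ = A.ncard := (Set.ncard_eq_toFinset_card _ hA).symm
  -- |B| ≤ ∑ |B ∩ D i|
  have hsumB : B.ncard ≤ ∑ i, (B ∩ D i).ncard := by
    have hsub : hB.toFinset ⊆ Finset.univ.biUnion tB := by
      intro x hx
      simp only [Set.Finite.mem_toFinset] at hx
      have : x ∈ ⋃ i, D i := hcover (Or.inr hx)
      obtain ⟨i, hi⟩ := Set.mem_iUnion.mp this
      simp only [Finset.mem_biUnion, htB, Set.Finite.mem_toFinset]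
      exact ⟨i, Finset.mem_univ i, hx, hi⟩
    calc B.ncard = hB.toFinset.card := Set.ncard_eq_toFinset_card _ hB
      _ ≤ (Finset.univ.biUnion tB).card := Finset.card_le_card hsub
      _ ≤ ∑ i, (tB i).card := Finset.card_biUnion_le
      _ = ∑ i, (B ∩ D i).ncard := by
          refine Finset.sum_congr rfl fun i _ => ?_
          exact (Set.ncard_eq_toFinset_card _ (hBi i)).symm
  -- denominator positive
  have hpos : (0 : ℚ) < (A.ncard : ℚ) + (B.ncard : ℚ) := by
    obtain ⟨x, hx⟩ := hne
    have : 0 < A.ncard + B.ncard := by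
      rcases hx with hx | hx
      · have := Set.ncard_pos hA |>.mpr ⟨x, hx⟩; omega
      · have := Set.ncard_pos hB |>.mpr ⟨x, hx⟩; omega
    exact_mod_cast Nat.cast_pos.mpr this
  -- bound on each summand
  have hterm : ∀ i, (((A ∩ D i).ncard : ℚ) -
      (⌈(((A ∩ D i).ncard : ℚ) + ((B ∩ D i).ncard : ℚ)) / 2⌉ : ℚ)) ≤
      (((A ∩ D i).ncard : ℚ) - ((B ∩ D i).ncard : ℚ)) / 2 := by
    intro i
    have := Int.le_ceil ((((A ∩ D i).ncard : ℚ) + ((B ∩ D i).ncard : ℚ)) / 2)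
    linarith
  have hnum : (∑ i, (((A ∩ D i).ncard : ℚ) -
      (⌈(((A ∩ D i).ncard : ℚ) + ((B ∩ D i).ncard : ℚ)) / 2⌉ : ℚ)))
      - (B.ncard : ℚ) ≤ ((A.ncard : ℚ) - 3 * (B.ncard : ℚ)) / 2 := by
    have h1 : (∑ i, (((A ∩ D i).ncard : ℚ) -
        (⌈(((A ∩ D i).ncard : ℚ) + ((B ∩ D i).ncard : ℚ)) / 2⌉ : ℚ))) ≤
        ∑ i, ((((A ∩ D i).ncard : ℚ) - ((B ∩ D i).ncard : ℚ)) / 2) :=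
      Finset.sum_le_sum fun i _ => hterm i
    have hA' : (∑ i, ((A ∩ D i).ncard : ℚ)) ≤ (A.ncard : ℚ) := by
      rw [← Nat.cast_sum]; exact_mod_cast hsumA
    have hB' : (B.ncard : ℚ) ≤ ∑ i, ((B ∩ D i).ncard : ℚ) := by
      rw [← Nat.cast_sum]; exact_mod_cast hsumB
    have h2 : ∑ i, ((((A ∩ D i).ncard : ℚ) - ((B ∩ D i).ncard : ℚ)) / 2) =
        ((∑ i, ((A ∩ D i).ncard : ℚ)) - ∑ i, ((B ∩ D i).ncard : ℚ)) / 2 := by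
      rw [← Finset.sum_div, Finset.sum_sub_distrib]
    linarith
  calc _ ≤ (((A.ncard : ℚ) - 3 * (B.ncard : ℚ)) / 2) / ((A.ncard : ℚ) + (B.ncard : ℚ)) :=
        (div_le_div_iff_of_pos_right hpos).mpr hnum
    _ = ((A.ncard : ℚ) - 3 * (B.ncard : ℚ)) / (2 * ((A.ncard : ℚ) + (B.ncard : ℚ))) := by
        rw [div_div]

end
end
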